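/- Let α ∈ (0,1) and z > 0 satisfy Φ̄(z) = α/2 (i.e. Φ(z) = 1 − α/2), and define g(ω) = z/√ω + (2/α)·( φ(z/√ω) − (z/√ω)·Φ̄(z/√ω) ) for ω > 0. Then g'(1) = 0, i.e. ω = 1 is a critical point of g. -/

import Mathlib

open MeasureTheory ProbabilityTheory Set

/-! The derivative of `g` is computed by the chain rule through `u = z/√ω`. The normal loss
function `φ(u) - u Φ̄(u)` has derivative `-Φ̄(u)`, because `φ'(u) = -u φ(u)` cancels the
`u φ(u)` coming from `(u Φ̄(u))'`. Hence `g'(ω) = (1 - (2/α) Φ̄(z/√ω)) · d(z/√ω)/dω`, and the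
first factor vanishes at `ω = 1` exactly when `Φ̄(z) = α/2`. -/

/-- The standard normal density `φ(t) = (2π)^{-1/2} exp(-t²/2)`. -/
noncomputable def phi (t : ℝ) : ℝ := (Real.sqrt (2 * Real.pi))⁻¹ * Real.exp (-t ^ 2 / 2)

/-- The standard normal cumulative distribution function `Φ`. -/
noncomputable def Phi (t : ℝ) : ℝ := ((gaussianReal 0 1) (Iic t)).toReal

/-- The expected-interval-score factor `g(ω) = z/√ω + (2/α)(φ(z/√ω) − (z/√ω) Φ̄(z/√ω))`. -/
noncomputable def g (z α ω : ℝ) : ℝ :=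
  z / Real.sqrt ω
    + (2 / α) * (phi (z / Real.sqrt ω) - (z / Real.sqrt ω) * (1 - Phi (z / Real.sqrt ω)))

lemma gaussianPDFReal_zero_one : gaussianPDFReal 0 1 = phi := by
  funext x
  simp [gaussianPDFReal, phi]

lemma continuous_phi : Continuous phi := by
  unfold phi
  fun_prop

lemma integrable_phi : Integrable phi :=
  gaussianPDFReal_zero_one ▸ integrable_gaussianPDFReal 0 1

lemma Phi_eq_integral (t : ℝ) : Phi t = ∫ x in Iic t, phi x := by
  rw [Phi, gaussianReal_apply_eq_integral 0 one_ne_zero, ENNReal.toReal_ofReal,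
    gaussianPDFReal_zero_one]
  exact setIntegral_nonneg measurableSet_Iic fun x _ => gaussianPDFReal_nonneg 0 1 x

lemma hasDerivAt_Phi (t : ℝ) : HasDerivAt Phi (phi t) t := by
  have hPhi : Phi = fun t => (∫ x in Iic (0 : ℝ), phi x) + ∫ x in (0 : ℝ)..t, phi x := by
    funext t
    rw [Phi_eq_integral, ← intervalIntegral.integral_Iic_sub_Iic integrable_phi.integrableOn
      integrable_phi.integrableOn]
    ring
  rw [hPhi]
  exact (intervalIntegral.integral_hasDerivAt_right integrable_phi.intervalIntegrable
    continuous_phi.aestronglyMeasurable.stronglyMeasurableAtFilter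
    continuous_phi.continuousAt).const_add _

lemma hasDerivAt_phi (t : ℝ) : HasDerivAt phi (-t * phi t) t := by
  have hexponent : HasDerivAt (fun t : ℝ => -t ^ 2 / 2) (-t) t := by
    simpa using ((hasDerivAt_pow 2 t).neg.div_const 2).congr_deriv (by ring)
  exact ((hexponent.exp).const_mul (Real.sqrt (2 * Real.pi))⁻¹).congr_deriv
    (by unfold phi; ring)

lemma hasDerivAt_phi_sub_mul_one_sub_Phi (u : ℝ) :
    HasDerivAt (fun u => phi u - u * (1 - Phi u)) (-(1 - Phi u)) u := by
  have htail := (hasDerivAt_id u).mul ((hasDerivAt_const u (1 : ℝ)).sub (hasDerivAt_Phi u))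
  exact ((hasDerivAt_phi u).sub htail).congr_deriv (by simp only [id, Pi.sub_apply]; ring)

lemma hasDerivAt_div_sqrt (z : ℝ) {ω : ℝ} (hω : 0 < ω) :
    HasDerivAt (fun ω => z / Real.sqrt ω) (-z / (2 * ω * Real.sqrt ω)) ω := by
  have hsqrt := Real.hasDerivAt_sqrt hω.ne'
  have hpos : 0 < Real.sqrt ω := Real.sqrt_pos.mpr hω
  refine ((hasDerivAt_const ω z).div hsqrt hpos.ne').congr_deriv ?_
  rw [Real.sq_sqrt hω.le]
  field_simp
  ring

lemma hasDerivAt_g (z α : ℝ) {ω : ℝ} (hω : 0 < ω) :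
    HasDerivAt (g z α)
      ((1 - 2 / α * (1 - Phi (z / Real.sqrt ω))) * (-z / (2 * ω * Real.sqrt ω))) ω := by
  have hF : HasDerivAt (fun u => u + 2 / α * (phi u - u * (1 - Phi u)))
      (1 - 2 / α * (1 - Phi (z / Real.sqrt ω))) (z / Real.sqrt ω) :=
    ((hasDerivAt_id _).add
      ((hasDerivAt_phi_sub_mul_one_sub_Phi (z / Real.sqrt ω)).const_mul (2 / α))).congr_deriv
      (by ring)
  exact hF.comp ω (hasDerivAt_div_sqrt z hω)

theorem stmt12_general (α z : ℝ) (hα : α ∈ Ioo (0 : ℝ) 1)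
    (hzα : 1 - Phi z = α / 2) :
    HasDerivAt (g z α) 0 1 := by
  refine (hasDerivAt_g z α one_pos).congr_deriv ?_
  rw [Real.sqrt_one, div_one, hzα, div_mul_div_cancel₀ hα.1.ne']
  ring

/-- If `Φ̄(z) = α/2`, then `ω = 1` is a critical point of `g`: `g'(1) = 0`. -/
theorem stmt12 (α z : ℝ) (hα : α ∈ Ioo (0 : ℝ) 1) (hz : 0 < z)
    (hzα : 1 - Phi z = α / 2) :
    HasDerivAt (g z α) 0 1 :=
  stmt12_general α z hα hzα
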